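/- Let σ ≥ 9 be an integer and let h ≥ 0, r ≥ 0 be integers satisfying σ + 3 − 4h < r < σ + 2 − 3h (i.e. (h,r) lies strictly between the line D_σ of slope −4 through (1, σ−1) and the line E_σ of slope −3 through (1, σ−1)). Then there do not exist a finite group G of order at least 2 and a function g : Fin r → G with g j ≠ 1 for all j such that σ − 1 = |G|·(h − 1 + r/2 − (1/2)·∑_j 1/orderOf(g j)) holds in ℚ. -/

import Mathlib

/-!
Every branch point contributes `(1 - 1/n) / 2 ≥ 1/4` to the Riemann–Hurwitz sum, and `h ≥ 3` is forced
by the two strict inequalities. A group of order at least `4` therefore gives `σ - 1 ≥ 4 (h - 1) + r`,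
i.e. `(h, r)` lies on or below `D_σ`. A group of order `2` or `3` is cyclic of prime order, so every
branch point has order `|G|`; then Riemann–Hurwitz forces `r = σ + 2 - 3h` (on `E_σ`) for `|G| = 3`,
and `r = 2 (σ + 1 - 2h)`, incompatible with `r < σ + 2 - 3h` and `h ≥ 1`, for `|G| = 2`.
-/

section RiemannHurwitz

variable {G ι : Type*} [Group G] [Fintype G] [Fintype ι]

lemma two_le_orderOf_of_ne_one {x : G} (hx : x ≠ 1) : 2 ≤ orderOf x := by
  have hne : orderOf x ≠ 1 := fun h => hx (orderOf_eq_one_iff.mp h)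
  have hpos : 0 < orderOf x := orderOf_pos x
  omega

lemma sum_one_div_orderOf_le {g : ι → G} (hg : ∀ j, g j ≠ 1) :
    ∑ j, (1 : ℚ) / orderOf (g j) ≤ Fintype.card ι / 2 := by
  calc ∑ j, (1 : ℚ) / orderOf (g j) ≤ ∑ _j : ι, (1 : ℚ) / 2 := by
        gcongr with j
        exact_mod_cast two_le_orderOf_of_ne_one (hg j)
    _ = Fintype.card ι / 2 := by simp [div_eq_mul_inv]

lemma sum_one_div_orderOf_of_prime_card (hp : (Fintype.card G).Prime) {g : ι → G}
    (hg : ∀ j, g j ≠ 1) :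
    ∑ j, (1 : ℚ) / orderOf (g j) = Fintype.card ι / Fintype.card G := by
  have := Fact.mk hp
  have horder : ∀ j, orderOf (g j) = Fintype.card G := fun j =>
    orderOf_eq_prime pow_card_eq_one (hg j)
  simp [horder, div_eq_mul_inv]

lemma four_mul_sub_one_add_card_le_of_four_le_card (h : ℚ) (hh : 1 ≤ h)
    (hG : 4 ≤ Fintype.card G) {g : ι → G} (hg : ∀ j, g j ≠ 1) :
    4 * (h - 1) + Fintype.card ι ≤
      Fintype.card G * (h - 1 + Fintype.card ι / 2 - (1 / 2) * ∑ j, (1 : ℚ) / orderOf (g j)) := by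
  have hsum := sum_one_div_orderOf_le hg
  have hG' : (4 : ℚ) ≤ Fintype.card G := by exact_mod_cast hG
  calc 4 * (h - 1) + Fintype.card ι = 4 * (h - 1 + Fintype.card ι / 4) := by ring
    _ ≤ Fintype.card G * (h - 1 + Fintype.card ι / 4) := by gcongr
    _ ≤ _ := by gcongr; linarith

end RiemannHurwitz

theorem conjecture_3_12_general
    (σ h r : ℕ)
    (hD : (σ : ℤ) + 3 - 4 * (h : ℤ) < (r : ℤ))
    (hE : (r : ℤ) < (σ : ℤ) + 2 - 3 * (h : ℤ)) :
    ¬ ∃ (G : Type) (_ : Group G) (_ : Fintype G) (g : Fin r → G),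
      2 ≤ Fintype.card G ∧ (∀ j, g j ≠ 1) ∧
      (σ : ℚ) - 1 =
        (Fintype.card G : ℚ) * ((h : ℚ) - 1 + (r : ℚ) / 2 -
          (1 / 2) * ∑ j, (1 : ℚ) / (orderOf (g j) : ℚ)) := by
  rintro ⟨G, _, _, g, hcard, hg, hRH⟩
  have hh : (3 : ℚ) ≤ h := by exact_mod_cast (by omega : 3 ≤ h)
  have hqD : (σ : ℚ) + 3 - 4 * h < r := by exact_mod_cast hD
  have hqE : (r : ℚ) < σ + 2 - 3 * h := by exact_mod_cast hE
  have hr : (0 : ℚ) ≤ r := Nat.cast_nonneg r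
  rcases le_or_gt 4 (Fintype.card G) with hlarge | hsmall
  · have hbound := four_mul_sub_one_add_card_le_of_four_le_card (h : ℚ) (by linarith) hlarge hg
    rw [Fintype.card_fin, ← hRH] at hbound
    linarith
  · rcases (by omega : Fintype.card G = 2 ∨ Fintype.card G = 3) with h2 | h3
    · rw [sum_one_div_orderOf_of_prime_card (h2 ▸ Nat.prime_two) hg, Fintype.card_fin, h2] at hRH
      push_cast at hRH
      linarith
    · rw [sum_one_div_orderOf_of_prime_card (h3 ▸ Nat.prime_three) hg, Fintype.card_fin, h3] at hRH
      push_cast at hRH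
      linarith

/-- Conjecture 3.12 of Anderson–Wootton: for `σ ≥ 9`, no point strictly between the line
`E_σ` of slope `-3` through `(1, σ-1)` and the line `D_σ` of slope `-4` through `(1, σ-1)`
is realized by a group action satisfying the Riemann–Hurwitz formula. -/
theorem conjecture_3_12
    (σ h r : ℕ) (hσ : 9 ≤ σ)
    (hD : (σ : ℤ) + 3 - 4 * (h : ℤ) < (r : ℤ))
    (hE : (r : ℤ) < (σ : ℤ) + 2 - 3 * (h : ℤ)) :
    ¬ ∃ (G : Type) (_ : Group G) (_ : Fintype G) (g : Fin r → G),
      2 ≤ Fintype.card G ∧ (∀ j, g j ≠ 1) ∧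
      (σ : ℚ) - 1 =
        (Fintype.card G : ℚ) * ((h : ℚ) - 1 + (r : ℚ) / 2 -
          (1 / 2) * ∑ j, (1 : ℚ) / (orderOf (g j) : ℚ)) :=
  conjecture_3_12_general σ h r hD hE
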